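/- Suppose (A+1)/2 > c. Then the socially optimal graph is: complete clique on T_A, each type-B node adjacent to every type-A node, and no type-B to type-B edges. Its social cost equals 2|T_B|(|T_B| − 1 + ((A+1)/2 + c)|T_A|) + |T_A|(|T_A|−1)(c_A + A). -/

import Mathlib

open SimpleGraph Finset

/-- Cost of player `i`: link costs plus weighted distances (weight `A` to type-A nodes). -/
noncomputable def cost {V : Type*} [Fintype V] [DecidableEq V] (A cA cB : ℝ) (tA : V → Bool)
    (G : SimpleGraph V) (i : V) : ℝ :=
  (Set.ncard {j | G.Adj i j} : ℝ) * (if tA i then cA else cB) +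
    ∑ j ∈ Finset.univ.erase i, (if tA j then A else 1) * (G.dist i j : ℝ)

/-- Social cost: sum of all players' costs. -/
noncomputable def socialCost {V : Type*} [Fintype V] [DecidableEq V] (A cA cB : ℝ)
    (tA : V → Bool) (G : SimpleGraph V) : ℝ :=
  ∑ i, cost A cA cB tA G i

/-- Complete graph on type-A nodes, every type-B node adjacent to every type-A node, and
no type-B to type-B edges. -/
def fullBipartiteClique (nA nB : ℕ) : SimpleGraph (Fin nA ⊕ Fin nB) :=
  SimpleGraph.fromRel (fun u v =>
    match u, v with
    | .inl _, .inl _ => True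
    | .inl _, .inr _ => True
    | .inr _, .inl _ => True
    | .inr _, .inr _ => False)

/-! Double the social cost and regroup it by unordered pairs `{i, j}`: such a pair pays
`(c_i + c_j) [ij ∈ E] + (w_i + w_j) d(i, j)`, where `w` is the distance weight (`A` on type A,
`1` on type B). In a connected graph a non-adjacent pair is at distance at least `2`, so each pair
pays at least `min (c_i + c_j + w_i + w_j) (2 (w_i + w_j))`. The full bipartite clique attains
this bound for every pair at once: linking is the cheaper option exactly when an endpoint has
type A, and two type-B nodes are at distance `2` through any type-A node. -/

open scoped Classical

section PairCost

variable {V : Type*} (A cA cB : ℝ) (tA : V → Bool) (G : SimpleGraph V)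

def weight (j : V) : ℝ := if tA j then A else 1

def price (i : V) : ℝ := if tA i then cA else cB

noncomputable def pairTerm (i j : V) : ℝ :=
  (if G.Adj i j then price cA cB tA i else 0) + weight A tA j * G.dist i j

noncomputable def pairCost (i j : V) : ℝ :=
  pairTerm A cA cB tA G i j + pairTerm A cA cB tA G j i

variable {A cA cB tA G}

theorem pairCost_comm (i j : V) : pairCost A cA cB tA G i j = pairCost A cA cB tA G j i :=
  add_comm _ _

theorem pairCost_eq (i j : V) :
    pairCost A cA cB tA G i j =
      (if G.Adj i j then price cA cB tA i + price cA cB tA j else 0) +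
        (weight A tA i + weight A tA j) * G.dist i j := by
  simp only [pairCost, pairTerm, G.adj_comm j i, G.dist_comm (u := j)]
  split_ifs <;> ring

theorem pairCost_self (i : V) : pairCost A cA cB tA G i i = 0 := by
  simp [pairCost_eq]

theorem pairCost_of_adj {i j : V} (h : G.Adj i j) :
    pairCost A cA cB tA G i j =
      price cA cB tA i + price cA cB tA j + weight A tA i + weight A tA j := by
  rw [pairCost_eq, if_pos h, SimpleGraph.dist_eq_one_iff_adj.mpr h]
  push_cast
  ring

theorem pairCost_of_dist_eq_two {i j : V} (h : G.dist i j = 2) :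
    pairCost A cA cB tA G i j = 2 * (weight A tA i + weight A tA j) := by
  have hnadj : ¬ G.Adj i j := fun hadj => by simp [SimpleGraph.dist_eq_one_iff_adj.mpr hadj] at h
  rw [pairCost_eq, if_neg hnadj, h]
  push_cast
  ring

theorem two_mul_le_pairCost_of_not_adj (hA : 0 ≤ A) (hG : G.Connected) {i j : V} (hne : i ≠ j)
    (hnadj : ¬ G.Adj i j) :
    2 * (weight A tA i + weight A tA j) ≤ pairCost A cA cB tA G i j := by
  have hd : (2 : ℝ) ≤ G.dist i j := by exact_mod_cast hG.one_lt_dist_of_ne_of_not_adj hne hnadj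
  have hw : 0 ≤ weight A tA i + weight A tA j := by
    unfold weight
    split_ifs <;> linarith
  rw [pairCost_eq, if_neg hnadj, zero_add]
  exact (mul_le_mul_of_nonneg_right hd hw).trans_eq (mul_comm _ _)

theorem min_le_pairCost (hA : 0 ≤ A) (hG : G.Connected) {i j : V} (hne : i ≠ j) :
    min (price cA cB tA i + price cA cB tA j + weight A tA i + weight A tA j)
        (2 * (weight A tA i + weight A tA j)) ≤ pairCost A cA cB tA G i j := by
  by_cases hadj : G.Adj i j
  · exact (min_le_left _ _).trans (pairCost_of_adj hadj).ge
  · exact (min_le_right _ _).trans (two_mul_le_pairCost_of_not_adj hA hG hne hadj)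

variable [Fintype V] [DecidableEq V] (A cA cB tA G)

theorem socialCost_eq_sum_pairTerm :
    socialCost A cA cB tA G = ∑ i, ∑ j, pairTerm A cA cB tA G i j := by
  refine Finset.sum_congr rfl fun i _ => ?_
  have hdeg : (Set.ncard {j | G.Adj i j} : ℝ) = ∑ j, if G.Adj i j then (1 : ℝ) else 0 := by
    rw [Set.ncard_eq_toFinset_card', Set.toFinset_ofPred, Finset.card_filter]
    push_cast
    rfl
  rw [cost, hdeg, Finset.sum_mul, Finset.sum_erase _ (by simp), ← Finset.sum_add_distrib]
  refine Finset.sum_congr rfl fun j _ => ?_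
  simp only [pairTerm, price, weight, ite_mul, one_mul, zero_mul]

theorem two_mul_socialCost_eq_sum_pairCost :
    2 * socialCost A cA cB tA G = ∑ i, ∑ j, pairCost A cA cB tA G i j := by
  simp only [pairCost, Finset.sum_add_distrib, socialCost_eq_sum_pairTerm]
  rw [Finset.sum_comm (f := fun i j => pairTerm A cA cB tA G j i)]
  ring

variable {A cA cB tA G}

theorem socialCost_le_of_pairCost_le {H : SimpleGraph V}
    (h : ∀ i j, i ≠ j → pairCost A cA cB tA H i j ≤ pairCost A cA cB tA G i j) :
    socialCost A cA cB tA H ≤ socialCost A cA cB tA G := by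
  suffices 2 * socialCost A cA cB tA H ≤ 2 * socialCost A cA cB tA G by linarith
  simp only [two_mul_socialCost_eq_sum_pairCost]
  refine Finset.sum_le_sum fun i _ => Finset.sum_le_sum fun j _ => ?_
  obtain rfl | hne := eq_or_ne i j
  · simp [pairCost_self]
  · exact h i j hne

end PairCost

section FullBipartiteClique

variable {nA nB : ℕ} {A cA cB : ℝ}

theorem fullBipartiteClique_adj {u v : Fin nA ⊕ Fin nB} :
    (fullBipartiteClique nA nB).Adj u v ↔ u ≠ v ∧ (u.isLeft ∨ v.isLeft) := by
  cases u <;> cases v <;> simp [fullBipartiteClique]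

theorem fullBipartiteClique_dist_inr_inr (hA : 0 < nA) {b b' : Fin nB} (h : b ≠ b') :
    (fullBipartiteClique nA nB).dist (.inr b) (.inr b') = 2 := by
  let a : Fin nA := ⟨0, hA⟩
  have hba : (fullBipartiteClique nA nB).Adj (.inr b) (.inl a) := by simp [fullBipartiteClique_adj]
  have hab' : (fullBipartiteClique nA nB).Adj (.inl a) (.inr b') := by
    simp [fullBipartiteClique_adj]
  have hle := SimpleGraph.dist_le (hba.toWalk.append hab'.toWalk)
  have hlt := (hba.reachable.trans hab'.reachable).one_lt_dist_of_ne_of_not_adj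
    (by simpa using h) (by simp [fullBipartiteClique_adj])
  simp only [SimpleGraph.Walk.length_append, SimpleGraph.Adj.toWalk, SimpleGraph.Walk.length_cons,
    SimpleGraph.Walk.length_nil] at hle
  omega

theorem fullBipartiteClique_pairCost_le_min (hA : 0 < nA) (hAA : cA ≤ A)
    (hAB : cA + cB ≤ A + 1) (hBB : 1 ≤ cB) {i j : Fin nA ⊕ Fin nB} (hne : i ≠ j) :
    pairCost A cA cB (·.isLeft) (fullBipartiteClique nA nB) i j ≤
      min (price cA cB (·.isLeft) i + price cA cB (·.isLeft) j +
          weight A (·.isLeft) i + weight A (·.isLeft) j)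
        (2 * (weight A (·.isLeft) i + weight A (·.isLeft) j)) := by
  rcases i with a | b <;> rcases j with a' | b'
  case inr.inr =>
    rw [pairCost_of_dist_eq_two (fullBipartiteClique_dist_inr_inr hA (by simpa using hne))]
    simp only [price, weight, Sum.isLeft_inr, Bool.false_eq_true, if_false]
    exact le_min (by linarith) le_rfl
  all_goals
    rw [pairCost_of_adj (fullBipartiteClique_adj.2 ⟨hne, by simp⟩)]
    simp only [price, weight, Sum.isLeft_inr, Sum.isLeft_inl, Bool.false_eq_true, if_true,
      if_false]
    exact le_min le_rfl (by linarith)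

theorem fullBipartiteClique_socialCost (hA : 0 < nA) :
    socialCost A cA cB (·.isLeft) (fullBipartiteClique nA nB) =
      nA * (nA - 1) * (cA + A) + nA * nB * (cA + cB + A + 1) + 2 * nB * (nB - 1) := by
  set H := fullBipartiteClique nA nB
  -- the diagonal terms vanish; writing them as subtracted constants keeps every sum constant
  have hAA (a a' : Fin nA) : pairCost A cA cB (·.isLeft) H (.inl a) (.inl a') =
      2 * (cA + A) - if a = a' then 2 * (cA + A) else 0 := by
    obtain rfl | hne := eq_or_ne a a'
    · simp [pairCost_self]
    · rw [pairCost_of_adj (fullBipartiteClique_adj.2 ⟨by simpa, by simp⟩)]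
      simp [hne, price, weight]
      ring
  have hAB (a : Fin nA) (b : Fin nB) :
      pairCost A cA cB (·.isLeft) H (.inl a) (.inr b) = cA + cB + A + 1 := by
    rw [pairCost_of_adj (fullBipartiteClique_adj.2 ⟨by simp, by simp⟩)]
    simp [price, weight]
  have hBA (a : Fin nA) (b : Fin nB) :
      pairCost A cA cB (·.isLeft) H (.inr b) (.inl a) = cA + cB + A + 1 := by
    rw [pairCost_comm, hAB]
  have hBB (b b' : Fin nB) : pairCost A cA cB (·.isLeft) H (.inr b) (.inr b') =
      4 - if b = b' then 4 else 0 := by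
    obtain rfl | hne := eq_or_ne b b'
    · simp [pairCost_self]
    · rw [pairCost_of_dist_eq_two (fullBipartiteClique_dist_inr_inr hA hne)]
      simp [hne, weight]
      ring
  have h := two_mul_socialCost_eq_sum_pairCost A cA cB (·.isLeft) H
  simp only [Fintype.sum_sum_type, hAA, hAB, hBA, hBB, Finset.sum_sub_distrib, Finset.sum_ite_eq,
    Finset.mem_univ, if_true, Finset.sum_const, Finset.card_univ, Fintype.card_fin,
    nsmul_eq_mul] at h
  linarith

end FullBipartiteClique

theorem fullBipartiteClique_optimal_general (nA nB : ℕ) (hA : 1 ≤ nA)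
    (A cA cB : ℝ) (hc : 1 < cA) (hcc : cA ≤ cB)
    (hreg : (cA + cB) / 2 < (A + 1) / 2) :
    (∀ G : SimpleGraph (Fin nA ⊕ Fin nB), G.Connected →
      socialCost A cA cB (fun v => v.isLeft) (fullBipartiteClique nA nB) ≤
        socialCost A cA cB (fun v => v.isLeft) G) ∧
    socialCost A cA cB (fun v => v.isLeft) (fullBipartiteClique nA nB) =
      2 * (nB : ℝ) * ((nB : ℝ) - 1 + ((A + 1) / 2 + (cA + cB) / 2) * (nA : ℝ)) +
        (nA : ℝ) * ((nA : ℝ) - 1) * (cA + A) := by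
  have hAB : cA + cB ≤ A + 1 := by linarith
  have hAA : cA ≤ A := by linarith
  refine ⟨fun G hG => socialCost_le_of_pairCost_le fun i j hne => ?_, ?_⟩
  · exact (fullBipartiteClique_pairCost_le_min hA hAA hAB (by linarith) hne).trans
      (min_le_pairCost (by linarith) hG hne)
  · rw [fullBipartiteClique_socialCost hA]
    ring

/-- If `(A+1)/2 > c`, the socially optimal graph is the clique on `T_A` together with all
type-B nodes adjacent to every type-A node and no type-B/type-B edges; its social cost is
`2|T_B|(|T_B| - 1 + ((A+1)/2 + c)|T_A|) + |T_A|(|T_A|-1)(c_A + A)`. -/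
theorem fullBipartiteClique_optimal (nA nB : ℕ) (hA : 1 ≤ nA) (hB : 1 ≤ nB)
    (A cA cB : ℝ) (hA1 : 1 < A) (hc : 1 < cA) (hcc : cA ≤ cB) (hcB : cB < A)
    (hreg : (cA + cB) / 2 < (A + 1) / 2) :
    (∀ G : SimpleGraph (Fin nA ⊕ Fin nB), G.Connected →
      socialCost A cA cB (fun v => v.isLeft) (fullBipartiteClique nA nB) ≤
        socialCost A cA cB (fun v => v.isLeft) G) ∧
    socialCost A cA cB (fun v => v.isLeft) (fullBipartiteClique nA nB) =
      2 * (nB : ℝ) * ((nB : ℝ) - 1 + ((A + 1) / 2 + (cA + cB) / 2) * (nA : ℝ)) +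
        (nA : ℝ) * ((nA : ℝ) - 1) * (cA + A) :=
  fullBipartiteClique_optimal_general nA nB hA A cA cB hc hcc hreg
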